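/- arXiv:1306.2914 — 3 statements merged into one kernel-verified Lean document; each statement's English description precedes it below -/
import Mathlib

section
/- Let h₁, h₂ ∈ ℂ and let K₁ be a transmutation kernel for (q,h₁). Define K₂(x,t) := (h₂−h₁)/2 + K₁(x,t) + ((h₂−h₁)/2)·∫_t^x (K₁(x,s) − K₁(x,−s)) ds. Then K₂ is a transmutation kernel for (q,h₂), i.e., K₂ is twice continuously differentiable and satisfies the hyperbolic equation and the Goursat data with h₂ in place of h₁. Moreover, for every continuous u : [-b,b] → ℂ and every x ∈ [-b,b], u(x) + ∫_{−x}^{x} K₂(x,t)·u(t) dt = w(x) + ∫_{−x}^{x} K₁(x,t)·w(t) dt, where w(t) := u(t) + ((h₂−h₁)/2)·∫_{−t}^{t} u(s) ds. -/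
open Set MeasureTheory Filter

/-- Second partial derivative with respect to the first variable, within `[-b,b]`. -/
noncomputable def d2x (b : ℝ) (K : ℝ → ℝ → ℂ) (x t : ℝ) : ℂ :=
  derivWithin (fun x' => derivWithin (fun x'' => K x'' t) (Set.Icc (-b) b) x') (Set.Icc (-b) b) x

/-- Second partial derivative with respect to the second variable, within `[-b,b]`. -/
noncomputable def d2t (b : ℝ) (K : ℝ → ℝ → ℂ) (x t : ℝ) : ℂ :=
  derivWithin (fun t' => derivWithin (fun t'' => K x t'') (Set.Icc (-b) b) t') (Set.Icc (-b) b) t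

/-- `K` is a transmutation kernel for `(q, h)` on `[-b,b]`: it is twice continuously
differentiable, satisfies `∂²K/∂x² − q(x)K = ∂²K/∂t²` on `[-b,b]²`, and the Goursat data
`K(x,x) = h/2 + (1/2)∫₀ˣ q` and `K(x,−x) = h/2`. -/
def IsTransmutationKernel (b : ℝ) (q : ℝ → ℂ) (h : ℂ) (K : ℝ → ℝ → ℂ) : Prop :=
  ContDiffOn ℝ 2 (fun p : ℝ × ℝ => K p.1 p.2) (Set.Icc (-b) b ×ˢ Set.Icc (-b) b) ∧
  (∀ x ∈ Set.Icc (-b) b, ∀ t ∈ Set.Icc (-b) b, d2x b K x t - q x * K x t = d2t b K x t) ∧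
  (∀ x ∈ Set.Icc (-b) b, K x x = h / 2 + (1 / 2) * ∫ s in (0:ℝ)..x, q s) ∧
  (∀ x ∈ Set.Icc (-b) b, K x (-x) = h / 2)

/-!
Put `G(x,s) = K₁(x,s) - K₁(x,-s)`, `Φ(x,y) = ∫₀ʸ G(x,s) ds` and `c = (h₂ - h₁)/2`, so that
`K₂(x,t) = c + K₁(x,t) + c J(x,t)` with `J(x,t) = ∫ₜˣ G(x,s) ds = Φ(x,x) - Φ(x,t)`.
Differentiation under the integral sign, justified on the closed square by the uniform continuity
of `∂ₓG`, shows that `Φ` is `C²`, hence so is `K₂`. Differentiating twice, the equation for `K₁`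
at `s` and at `-s` turns `∫ₜˣ ∂ₓ²G(x,s) ds` into `q(x) J` plus boundary values of `∂ₜK₁`, and the
derivatives of the Goursat data along the diagonals, `∂ₓK₁ + ∂ₜK₁ = q/2` on `t = x` and
`∂ₓK₁ - ∂ₜK₁ = 0` on `t = -x`, give `∂ₓ²J - q J - ∂ₜ²J = q`; this cancels the term `-q c` coming
from the constant. On the diagonals `J` vanishes, the interval being empty or `G(x,·)` odd.
For the operator identity, integration by parts moves `J(x,t)` onto the primitive
`W(t) = ∫₋ₓᵗ u`, and the reflection `t ↦ -t` turns `W(t) - W(-t)` into `∫₋ₜᵗ u`.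
-/

open intervalIntegral Asymptotics Function
open scoped Interval Topology

theorem neg_mem_Icc_neg {b t : ℝ} (ht : t ∈ Icc (-b) b) : -t ∈ Icc (-b) b :=
  ⟨neg_le_neg ht.2, neg_le.2 ht.1⟩

theorem zero_mem_Icc_neg {b : ℝ} (hb : 0 < b) : (0 : ℝ) ∈ Icc (-b) b :=
  ⟨neg_nonpos.2 hb.le, hb.le⟩

theorem mapsTo_neg_uIcc (x : ℝ) : MapsTo Neg.neg [[-x, x]] [[-x, x]] := fun t ht => by
  rw [mem_uIcc] at ht ⊢
  rcases ht with ⟨h₁, h₂⟩ | ⟨h₁, h₂⟩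
  · exact Or.inl ⟨by linarith, by linarith⟩
  · exact Or.inr ⟨by linarith, by linarith⟩

section OneVariable

variable {E : Type*} [NormedAddCommGroup E] [NormedSpace ℝ E]

theorem derivWithin_derivWithin_eq {s : Set ℝ} (hs : UniqueDiffOn ℝ s) {f f' : ℝ → E} {f'' : E}
    {x : ℝ} (hx : x ∈ s) (hf : ∀ y ∈ s, HasDerivWithinAt f (f' y) s y)
    (hf' : HasDerivWithinAt f' f'' s x) :
    derivWithin (derivWithin f s) s x = f'' := by
  rw [derivWithin_congr (fun y hy => (hf y hy).derivWithin (hs y hy))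
    ((hf x hx).derivWithin (hs x hx))]
  exact hf'.derivWithin (hs x hx)

theorem integral_sub_integral_neg {u : ℝ → E} {x t : ℝ} (hu : ContinuousOn u [[-x, x]])
    (ht : t ∈ [[-x, x]]) :
    (∫ s in (-x)..t, u s) - ∫ s in (-x)..(-t), u s = ∫ s in (-t)..t, u s :=
  integral_interval_sub_left (hu.mono (uIcc_subset_uIcc left_mem_uIcc ht)).intervalIntegrable
    (hu.mono (uIcc_subset_uIcc left_mem_uIcc (mapsTo_neg_uIcc x ht))).intervalIntegrable

theorem ContinuousOn.integral_neg_self {u : ℝ → E} {x : ℝ} (hu : ContinuousOn u [[-x, x]]) :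
    ContinuousOn (fun t => ∫ s in (-t)..t, u s) [[-x, x]] := by
  have hW := continuousOn_primitive_interval (hu.integrableOn_compact (μ := volume) isCompact_uIcc)
  exact (hW.sub (hW.comp continuousOn_neg (mapsTo_neg_uIcc x))).congr fun t ht =>
    (integral_sub_integral_neg hu ht).symm

variable [CompleteSpace E]

theorem ContinuousOn.hasDerivWithinAt_integral {f : ℝ → E} {l r a x : ℝ}
    (hf : ContinuousOn f (Icc l r)) (ha : a ∈ Icc l r) (hx : x ∈ Icc l r) :
    HasDerivWithinAt (fun y => ∫ s in a..y, f s) (f x) (Icc l r) x :=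
  have : FTCFilter x (𝓝[Icc l r] x) (𝓝[Icc l r] x) := FTCFilter.nhdsIcc (h := ⟨hx⟩)
  integral_hasDerivWithinAt_right (hf.mono (uIcc_subset_Icc ha hx)).intervalIntegrable
    ⟨Icc l r, self_mem_nhdsWithin, hf.aestronglyMeasurable measurableSet_Icc⟩ (hf x hx)

theorem integral_eq_sub_of_hasDerivWithinAt_Icc {f f' : ℝ → E} {l r a a' : ℝ}
    (ha : a ∈ Icc l r) (ha' : a' ∈ Icc l r)
    (hf : ∀ x ∈ Icc l r, HasDerivWithinAt f (f' x) (Icc l r) x)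
    (hf' : ContinuousOn f' (Icc l r)) :
    ∫ x in a..a', f' x = f a' - f a := by
  have hsub : [[a, a']] ⊆ Icc l r := uIcc_subset_Icc ha ha'
  refine integral_eq_sub_of_hasDeriv_right
    (fun x hx => (hf x (hsub hx)).continuousWithinAt.mono hsub) (fun x hx => ?_)
    (hf'.mono hsub).intervalIntegrable
  have hx' : x ∈ Ioo l r :=
    ⟨(le_min ha.1 ha'.1).trans_lt hx.1, hx.2.trans_le (max_le ha.2 ha'.2)⟩
  exact ((hf x (Ioo_subset_Icc_self hx')).hasDerivAt (Icc_mem_nhds hx'.1 hx'.2)).hasDerivWithinAt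

variable {𝕜 : Type*} [RCLike 𝕜]

theorem integral_sub_comp_neg_eq_zero (f : ℝ → 𝕜) (x : ℝ) :
    ∫ s in (-x)..x, (f s - f (-s)) = 0 := by
  have h := integral_comp_neg (a := -x) (b := x) fun s => f s - f (-s)
  simp only [neg_neg] at h
  refine self_eq_neg.1 (h.symm.trans ?_)
  simp only [← intervalIntegral.integral_neg, neg_sub]

theorem integral_integral_mul_swap {f g : ℝ → 𝕜} {a b : ℝ}
    (hf : ContinuousOn f [[a, b]]) (hg : ContinuousOn g [[a, b]]) :
    ∫ t in a..b, (∫ s in t..b, g s) * f t = ∫ t in a..b, (∫ s in a..t, f s) * g t := by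
  have hA : ∀ t ∈ [[a, b]],
      HasDerivWithinAt (fun t => ∫ s in t..b, g s) (-g t) [[a, b]] t := fun t ht => by
    rw [funext fun t => integral_symm (μ := volume) (f := g) b t]
    exact (hg.hasDerivWithinAt_integral (l := a ⊓ b) (r := a ⊔ b) right_mem_uIcc ht).neg
  have hW : ∀ t ∈ [[a, b]], HasDerivWithinAt (fun t => ∫ s in a..t, f s) (f t) [[a, b]] t :=
    fun t ht => hf.hasDerivWithinAt_integral (l := a ⊓ b) (r := a ⊔ b) left_mem_uIcc ht
  rw [integral_mul_deriv_eq_deriv_mul_of_hasDerivWithinAt hA hW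
    hg.neg.intervalIntegrable hf.intervalIntegrable]
  simp only [integral_same, zero_mul, mul_zero, sub_zero, neg_mul, intervalIntegral.integral_neg,
    zero_sub, neg_neg]
  exact integral_congr fun t _ => mul_comm _ _

theorem integral_mul_sub_comp_neg {f g : ℝ → 𝕜} {x : ℝ}
    (hf : ContinuousOn f [[-x, x]]) (hg : ContinuousOn g [[-x, x]]) :
    ∫ t in (-x)..x, f t * (g t - g (-t)) = ∫ t in (-x)..x, (f t - f (-t)) * g t := by
  have hreflect : ∫ t in (-x)..x, f t * g (-t) = ∫ t in (-x)..x, f (-t) * g t := by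
    simpa using integral_comp_neg (a := -x) (b := x) fun t => f (-t) * g t
  simp only [mul_sub, sub_mul]
  rw [intervalIntegral.integral_sub, intervalIntegral.integral_sub, hreflect]
  all_goals apply ContinuousOn.intervalIntegrable; fun_prop (disch := exact mapsTo_neg_uIcc x)

theorem integral_integral_sub_comp_neg_mul {k u : ℝ → 𝕜} {x : ℝ}
    (hk : ContinuousOn k [[-x, x]]) (hu : ContinuousOn u [[-x, x]]) :
    ∫ t in (-x)..x, (∫ s in t..x, (k s - k (-s))) * u t
      = ∫ t in (-x)..x, k t * ∫ s in (-t)..t, u s := by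
  set W : ℝ → 𝕜 := fun t => ∫ s in (-x)..t, u s
  have hW : ContinuousOn W [[-x, x]] :=
    continuousOn_primitive_interval (hu.integrableOn_compact isCompact_uIcc)
  calc _ = ∫ t in (-x)..x, W t * (k t - k (-t)) :=
        integral_integral_mul_swap hu (by fun_prop (disch := exact mapsTo_neg_uIcc x))
    _ = ∫ t in (-x)..x, (W t - W (-t)) * k t := integral_mul_sub_comp_neg hW hk
    _ = _ := integral_congr fun t ht => by rw [integral_sub_integral_neg hu ht, mul_comm]

end OneVariable

section Square

variable {E : Type*} [NormedAddCommGroup E] [NormedSpace ℝ E]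

noncomputable def partialFst (I : Set ℝ) (F : ℝ × ℝ → E) (p : ℝ × ℝ) : E :=
  fderivWithin ℝ F (I ×ˢ I) p (1, 0)

noncomputable def partialSnd (I : Set ℝ) (F : ℝ × ℝ → E) (p : ℝ × ℝ) : E :=
  fderivWithin ℝ F (I ×ˢ I) p (0, 1)

variable {I J : Set ℝ} {F : ℝ × ℝ → E}

theorem DifferentiableWithinAt.hasFDerivWithinAt_partial {p : ℝ × ℝ}
    (hF : DifferentiableWithinAt ℝ F (I ×ˢ I) p) :
    HasFDerivWithinAt F ((ContinuousLinearMap.fst ℝ ℝ ℝ).smulRight (partialFst I F p)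
      + (ContinuousLinearMap.snd ℝ ℝ ℝ).smulRight (partialSnd I F p)) (I ×ˢ I) p := by
  convert hF.hasFDerivWithinAt using 1
  ext <;> simp [partialFst, partialSnd]

theorem HasFDerivWithinAt.hasDerivWithinAt_comp_prodMk {f : ℝ × ℝ → E} {A B : E}
    {s : Set (ℝ × ℝ)} {γ₁ γ₂ : ℝ → ℝ} {v₁ v₂ x : ℝ}
    (h₁ : HasDerivWithinAt γ₁ v₁ J x) (h₂ : HasDerivWithinAt γ₂ v₂ J x)
    (hf : HasFDerivWithinAt f ((ContinuousLinearMap.fst ℝ ℝ ℝ).smulRight A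
      + (ContinuousLinearMap.snd ℝ ℝ ℝ).smulRight B) s (γ₁ x, γ₂ x))
    (hγ : MapsTo (fun y => (γ₁ y, γ₂ y)) J s) :
    HasDerivWithinAt (fun y => f (γ₁ y, γ₂ y)) (v₁ • A + v₂ • B) J x := by
  simpa [Function.comp_def] using hf.comp_hasDerivWithinAt x (h₁.prodMk h₂) hγ

theorem DifferentiableOn.hasDerivWithinAt_comp_prodMk (hF : DifferentiableOn ℝ F (I ×ˢ I))
    {γ₁ γ₂ : ℝ → ℝ} {v₁ v₂ x : ℝ} (h₁ : HasDerivWithinAt γ₁ v₁ J x)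
    (h₂ : HasDerivWithinAt γ₂ v₂ J x) (hγ : MapsTo (fun y => (γ₁ y, γ₂ y)) J (I ×ˢ I))
    (hx : x ∈ J) :
    HasDerivWithinAt (fun y => F (γ₁ y, γ₂ y))
      (v₁ • partialFst I F (γ₁ x, γ₂ x) + v₂ • partialSnd I F (γ₁ x, γ₂ x)) J x :=
  (hF _ (hγ hx)).hasFDerivWithinAt_partial.hasDerivWithinAt_comp_prodMk h₁ h₂ hγ

theorem DifferentiableOn.hasDerivWithinAt_partialFst (hF : DifferentiableOn ℝ F (I ×ˢ I))
    {x t : ℝ} (hx : x ∈ I) (ht : t ∈ I) :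
    HasDerivWithinAt (fun y => F (y, t)) (partialFst I F (x, t)) I x := by
  simpa using hF.hasDerivWithinAt_comp_prodMk (hasDerivWithinAt_id x I)
    (hasDerivWithinAt_const x I t) (fun _ hy => ⟨hy, ht⟩) hx

theorem DifferentiableOn.hasDerivWithinAt_partialSnd (hF : DifferentiableOn ℝ F (I ×ˢ I))
    {x t : ℝ} (hx : x ∈ I) (ht : t ∈ I) :
    HasDerivWithinAt (fun y => F (x, y)) (partialSnd I F (x, t)) I t := by
  simpa using hF.hasDerivWithinAt_comp_prodMk (hasDerivWithinAt_const t I x)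
    (hasDerivWithinAt_id t I) (fun _ hy => ⟨hx, hy⟩) ht

theorem ContDiffOn.partialFst {n : WithTop ℕ∞} (hF : ContDiffOn ℝ (n + 1) F (I ×ˢ I))
    (hI : UniqueDiffOn ℝ I) : ContDiffOn ℝ n (partialFst I F) (I ×ˢ I) :=
  (ContinuousLinearMap.apply ℝ E ((1 : ℝ), (0 : ℝ))).contDiff.comp_contDiffOn
    (hF.fderivWithin (hI.prod hI) le_rfl)

theorem ContDiffOn.partialSnd {n : WithTop ℕ∞} (hF : ContDiffOn ℝ (n + 1) F (I ×ˢ I))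
    (hI : UniqueDiffOn ℝ I) : ContDiffOn ℝ n (partialSnd I F) (I ×ˢ I) :=
  (ContinuousLinearMap.apply ℝ E ((0 : ℝ), (1 : ℝ))).contDiff.comp_contDiffOn
    (hF.fderivWithin (hI.prod hI) le_rfl)

theorem partialFst_congr {F' : ℝ × ℝ → E} (h : EqOn F F' (I ×ˢ I)) {p : ℝ × ℝ}
    (hp : p ∈ I ×ˢ I) : partialFst I F p = partialFst I F' p := by
  simp only [partialFst, fderivWithin_congr h (h hp)]

noncomputable def primitiveSnd (c : ℝ) (F : ℝ × ℝ → E) (p : ℝ × ℝ) : E :=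
  ∫ s in c..p.2, F (p.1, s)

variable {a b c : ℝ}

theorem continuousOn_primitiveSnd (hc : c ∈ Icc a b)
    (hF : ContinuousOn F (Icc a b ×ˢ Icc a b)) :
    ContinuousOn (primitiveSnd c F) (Icc a b ×ˢ Icc a b) := by
  have hab : a ≤ b := hc.1.trans hc.2
  set π : ℝ → ℝ := fun x => projIcc a b hab x
  have hπ : ∀ x ∈ Icc a b, π x = x := fun x hx => by simp [π, projIcc_of_mem hab hx]
  have hcont : Continuous fun p : ℝ × ℝ => ∫ s in c..p.2, F (π p.1, π s) :=
    continuous_parametric_primitive_of_continuous (f := fun x s => F (π x, π s))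
      (hF.comp_continuous (by fun_prop) fun p => ⟨(projIcc a b hab p.1).2, (projIcc a b hab p.2).2⟩)
  refine hcont.continuousOn.congr fun p hp => integral_congr fun s hs => ?_
  simp only [hπ p.1 hp.1, hπ s (uIcc_subset_Icc hc hp.2 hs)]

theorem primitiveSnd_sub_primitiveSnd (hc : c ∈ Icc a b)
    (hF : ContinuousOn F (Icc a b ×ˢ Icc a b)) {x y t : ℝ} (hx : x ∈ Icc a b) (hy : y ∈ Icc a b)
    (ht : t ∈ Icc a b) :
    primitiveSnd c F (x, y) - primitiveSnd c F (x, t) = ∫ s in t..y, F (x, s) := by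
  have hslice : ContinuousOn (fun s => F (x, s)) (Icc a b) :=
    hF.uncurry_left (f := fun x s => F (x, s)) x hx
  exact integral_interval_sub_left (hslice.mono (uIcc_subset_Icc hc hy)).intervalIntegrable
    (hslice.mono (uIcc_subset_Icc hc ht)).intervalIntegrable

theorem exists_norm_sub_sub_smul_partialFst_le (hab : a < b)
    (hF : ContDiffOn ℝ 1 F (Icc a b ×ˢ Icc a b)) {ε : ℝ} (hε : 0 < ε) :
    ∃ δ > 0, ∀ x₀ ∈ Icc a b, ∀ x ∈ Icc a b, ∀ s ∈ Icc a b, |x - x₀| < δ →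
      ‖F (x, s) - F (x₀, s) - (x - x₀) • partialFst (Icc a b) F (x₀, s)‖ ≤ ε * |x - x₀| := by
  have hI : UniqueDiffOn ℝ (Icc a b) := uniqueDiffOn_Icc hab
  obtain ⟨δ, hδ, hFx⟩ := Metric.uniformContinuousOn_iff.1
    ((isCompact_Icc.prod isCompact_Icc).uniformContinuousOn_of_continuous
      (hF.partialFst (n := 0) hI).continuousOn) ε hε
  refine ⟨δ, hδ, fun x₀ hx₀ x hx s hs hxx₀ => ?_⟩
  set D := Icc a b ∩ Metric.ball x₀ δ
  have hderiv : ∀ ξ ∈ D, HasDerivWithinAt (fun ξ => F (ξ, s) - ξ • partialFst (Icc a b) F (x₀, s))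
      (partialFst (Icc a b) F (ξ, s) - partialFst (Icc a b) F (x₀, s)) D ξ := fun ξ hξ =>
    (((hF.differentiableOn one_ne_zero).hasDerivWithinAt_partialFst hξ.1 hs).mono
      inter_subset_left).sub (by simpa using (hasDerivWithinAt_id ξ D).smul_const _)
  have hbound : ∀ ξ ∈ D,
      ‖partialFst (Icc a b) F (ξ, s) - partialFst (Icc a b) F (x₀, s)‖ ≤ ε := fun ξ hξ => by
    rw [← dist_eq_norm]
    refine (hFx _ ⟨hξ.1, hs⟩ _ ⟨hx₀, hs⟩ ?_).le
    simpa [Prod.dist_eq, hδ] using hξ.2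
  have := (convex_Icc a b).inter (convex_ball x₀ δ) |>.norm_image_sub_le_of_norm_hasDerivWithin_le
    hderiv hbound ⟨hx₀, Metric.mem_ball_self hδ⟩ ⟨hx, by simpa [Real.dist_eq] using hxx₀⟩
  rw [← Real.norm_eq_abs]
  convert this using 2
  rw [sub_smul]; abel

theorem hasDerivWithinAt_primitiveSnd_fst [CompleteSpace E] (hab : a < b)
    (hF : ContDiffOn ℝ 1 F (Icc a b ×ˢ Icc a b)) (hc : c ∈ Icc a b) {x₀ y : ℝ}
    (hx₀ : x₀ ∈ Icc a b) (hy : y ∈ Icc a b) :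
    HasDerivWithinAt (fun x => primitiveSnd c F (x, y))
      (primitiveSnd c (partialFst (Icc a b) F) (x₀, y)) (Icc a b) x₀ := by
  have hFc := hF.continuousOn
  have hFx := (hF.partialFst (n := 0) (uniqueDiffOn_Icc hab)).continuousOn
  have hsub : [[c, y]] ⊆ Icc a b := uIcc_subset_Icc hc hy
  have hint : ∀ x ∈ Icc a b, ∀ {G : ℝ × ℝ → E}, ContinuousOn G (Icc a b ×ˢ Icc a b) →
      IntervalIntegrable (fun s => G (x, s)) volume c y := fun x hx G hG =>
    ((hG.uncurry_left (f := fun x s => G (x, s)) x hx).mono hsub).intervalIntegrable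
  rw [hasDerivWithinAt_iff_isLittleO, isLittleO_iff]
  intro ε hε
  obtain ⟨δ, hδ, hunif⟩ := exists_norm_sub_sub_smul_partialFst_le hab hF
    (by positivity : 0 < ε / (|y - c| + 1))
  filter_upwards [inter_mem_nhdsWithin (Icc a b) (Metric.ball_mem_nhds x₀ hδ)]
    with x ⟨hx, hxx₀⟩
  have hxx₀ : |x - x₀| < δ := by simpa [Real.dist_eq] using hxx₀
  simp only [primitiveSnd]
  rw [← intervalIntegral.integral_smul, ← intervalIntegral.integral_sub (hint x hx hFc)
    (hint x₀ hx₀ hFc), ← intervalIntegral.integral_sub ((hint x hx hFc).sub (hint x₀ hx₀ hFc))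
    (by exact (hint x₀ hx₀ hFx).smul (x - x₀))]
  calc _ ≤ ε / (|y - c| + 1) * |x - x₀| * |y - c| :=
        norm_integral_le_of_norm_le_const fun s hs =>
          hunif x₀ hx₀ x hx s (hsub (uIoc_subset_uIcc hs)) hxx₀
    _ ≤ ε * ‖x - x₀‖ := by
        rw [Real.norm_eq_abs, div_mul_eq_mul_div, div_mul_eq_mul_div, div_le_iff₀ (by positivity)]
        nlinarith [abs_nonneg (x - x₀), abs_nonneg (y - c)]

theorem isLittleO_integral_sub_of_continuousWithinAt {p : ℝ × ℝ} (hp : p ∈ Icc a b ×ˢ Icc a b)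
    (hF : ContinuousWithinAt F (Icc a b ×ˢ Icc a b) p) :
    (fun q : ℝ × ℝ => ∫ s in p.2..q.2, (F (q.1, s) - F p)) =o[𝓝[Icc a b ×ˢ Icc a b] p]
      fun q => q - p := by
  rw [isLittleO_iff]
  intro ε hε
  obtain ⟨δ, hδ, hFδ⟩ := Metric.continuousWithinAt_iff.1 hF ε hε
  filter_upwards [inter_mem_nhdsWithin _ (Metric.ball_mem_nhds p hδ)] with q ⟨hq, hqp⟩
  rw [Metric.mem_ball, Prod.dist_eq, max_lt_iff] at hqp
  calc _ ≤ ε * |q.2 - p.2| := norm_integral_le_of_norm_le_const fun s hs => by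
        have hs' : s ∈ [[p.2, q.2]] := uIoc_subset_uIcc hs
        rw [← dist_eq_norm]
        refine (hFδ (x := (q.1, s)) ⟨hq.1, uIcc_subset_Icc hp.2 hq.2 hs'⟩ ?_).le
        rw [Prod.dist_eq, max_lt_iff, dist_comm s]
        exact ⟨hqp.1, (Real.dist_left_le_of_mem_uIcc hs').trans_lt (dist_comm q.2 p.2 ▸ hqp.2)⟩
    _ ≤ ε * ‖q - p‖ := by
        gcongr
        exact norm_snd_le (q - p)

theorem hasFDerivWithinAt_primitiveSnd [CompleteSpace E] (hab : a < b)
    (hF : ContDiffOn ℝ 1 F (Icc a b ×ˢ Icc a b)) (hc : c ∈ Icc a b) {p : ℝ × ℝ}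
    (hp : p ∈ Icc a b ×ˢ Icc a b) :
    HasFDerivWithinAt (primitiveSnd c F)
      ((ContinuousLinearMap.fst ℝ ℝ ℝ).smulRight (primitiveSnd c (partialFst (Icc a b) F) p)
        + (ContinuousLinearMap.snd ℝ ℝ ℝ).smulRight (F p)) (Icc a b ×ˢ Icc a b) p := by
  have hfst : (fun q : ℝ × ℝ => primitiveSnd c F (q.1, p.2) - primitiveSnd c F p
      - (q.1 - p.1) • primitiveSnd c (partialFst (Icc a b) F) p)
        =o[𝓝[Icc a b ×ˢ Icc a b] p] fun q => q - p :=
    ((hasDerivWithinAt_iff_isLittleO.1 (hasDerivWithinAt_primitiveSnd_fst hab hF hc hp.1 hp.2)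
      ).comp_tendsto (continuous_fst.continuousWithinAt.tendsto_nhdsWithin fun q hq => hq.1)
      ).trans_isBigO (isBigO_of_le _ fun q => norm_fst_le (q - p))
  have hsnd := isLittleO_integral_sub_of_continuousWithinAt hp (hF.continuousOn p hp)
  rw [hasFDerivWithinAt_iff_isLittleO]
  refine (hfst.add hsnd).congr' (eventually_mem_nhdsWithin.mono fun q hq => ?_) EventuallyEq.rfl
  have hslice : ∫ s in p.2..q.2, F (q.1, s)
      = primitiveSnd c F q - primitiveSnd c F (q.1, p.2) :=
    (primitiveSnd_sub_primitiveSnd hc hF.continuousOn hq.1 hq.2 hp.2).symm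
  have hint : IntervalIntegrable (fun s => F (q.1, s)) volume p.2 q.2 :=
    ((hF.continuousOn.uncurry_left (f := fun x s => F (x, s)) q.1 hq.1).mono
      (uIcc_subset_Icc hp.2 hq.2)).intervalIntegrable
  simp only [add_apply, ContinuousLinearMap.smulRight_apply,
    ContinuousLinearMap.coe_fst', ContinuousLinearMap.coe_snd', Prod.fst_sub, Prod.snd_sub]
  rw [intervalIntegral.integral_sub hint intervalIntegrable_const,
    intervalIntegral.integral_const, hslice]
  abel

theorem contDiffOn_primitiveSnd [CompleteSpace E] (hab : a < b) (hc : c ∈ Icc a b) (n : ℕ) :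
    ∀ {F : ℝ × ℝ → E}, ContDiffOn ℝ n F (Icc a b ×ˢ Icc a b) →
      ContDiffOn ℝ n (primitiveSnd c F) (Icc a b ×ˢ Icc a b) := by
  have hQ : UniqueDiffOn ℝ (Icc a b ×ˢ Icc a b) :=
    (uniqueDiffOn_Icc hab).prod (uniqueDiffOn_Icc hab)
  induction n with
  | zero => exact fun hF => contDiffOn_zero.2 (continuousOn_primitiveSnd hc hF.continuousOn)
  | succ n ih =>
    intro F hF
    have hF1 : ContDiffOn ℝ 1 F (Icc a b ×ˢ Icc a b) := hF.of_le (by exact_mod_cast n.succ_pos)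
    have hderiv := fun p (hp : p ∈ Icc a b ×ˢ Icc a b) =>
      hasFDerivWithinAt_primitiveSnd hab hF1 hc hp
    rw [Nat.cast_succ, contDiffOn_succ_iff_fderivWithin hQ]
    refine ⟨fun p hp => (hderiv p hp).differentiableWithinAt, by simp, ?_⟩
    refine ContDiffOn.congr ?_ fun p hp => (hderiv p hp).fderivWithin (hQ p hp)
    exact (contDiffOn_const.smulRight (ih (hF.partialFst (uniqueDiffOn_Icc hab)))).add
      (contDiffOn_const.smulRight (hF.of_le (by exact_mod_cast n.le_succ)))

end Square

section SymmetricSquare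

variable {E : Type*} [NormedAddCommGroup E] [NormedSpace ℝ E] {b : ℝ} {F : ℝ × ℝ → E}

def oddSnd (F : ℝ × ℝ → E) (p : ℝ × ℝ) : E := F p - F (p.1, -p.2)

theorem ContDiffOn.oddSnd {n : WithTop ℕ∞} (hF : ContDiffOn ℝ n F (Icc (-b) b ×ˢ Icc (-b) b)) :
    ContDiffOn ℝ n (oddSnd F) (Icc (-b) b ×ˢ Icc (-b) b) :=
  hF.sub (hF.comp (contDiff_fst.prodMk contDiff_snd.neg).contDiffOn
    fun _ hp => ⟨hp.1, neg_mem_Icc_neg hp.2⟩)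

theorem DifferentiableOn.hasDerivWithinAt_partialSnd_neg
    (hF : DifferentiableOn ℝ F (Icc (-b) b ×ˢ Icc (-b) b)) {x t : ℝ} (hx : x ∈ Icc (-b) b)
    (ht : t ∈ Icc (-b) b) :
    HasDerivWithinAt (fun y => F (x, -y)) (-partialSnd (Icc (-b) b) F (x, -t)) (Icc (-b) b) t := by
  simpa using hF.hasDerivWithinAt_comp_prodMk (hasDerivWithinAt_const t _ x)
    (hasDerivWithinAt_id t _).neg (fun _ hy => ⟨hx, neg_mem_Icc_neg hy⟩) ht

theorem partialFst_add_partialSnd_eq_of_hasDerivWithinAt (hb : 0 < b)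
    (hF : DifferentiableOn ℝ F (Icc (-b) b ×ˢ Icc (-b) b)) {x : ℝ} {g : E}
    (hx : x ∈ Icc (-b) b) (hg : HasDerivWithinAt (fun y => F (y, y)) g (Icc (-b) b) x) :
    partialFst (Icc (-b) b) F (x, x) + partialSnd (Icc (-b) b) F (x, x) = g :=
  (uniqueDiffOn_Icc (by linarith) x hx).eq_deriv _ (by
    simpa using hF.hasDerivWithinAt_comp_prodMk (hasDerivWithinAt_id x _)
      (hasDerivWithinAt_id x _) (fun _ hy => ⟨hy, hy⟩) hx) hg

theorem partialFst_sub_partialSnd_eq_of_hasDerivWithinAt (hb : 0 < b)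
    (hF : DifferentiableOn ℝ F (Icc (-b) b ×ˢ Icc (-b) b)) {x : ℝ} {g : E}
    (hx : x ∈ Icc (-b) b) (hg : HasDerivWithinAt (fun y => F (y, -y)) g (Icc (-b) b) x) :
    partialFst (Icc (-b) b) F (x, -x) - partialSnd (Icc (-b) b) F (x, -x) = g :=
  (uniqueDiffOn_Icc (by linarith) x hx).eq_deriv _ (by
    simpa [sub_eq_add_neg] using hF.hasDerivWithinAt_comp_prodMk (hasDerivWithinAt_id x _)
      (hasDerivWithinAt_id x _).neg (fun _ hy => ⟨hy, neg_mem_Icc_neg hy⟩) hx) hg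

theorem partialFst_oddSnd (hb : 0 < b) (hF : ContDiffOn ℝ 1 F (Icc (-b) b ×ˢ Icc (-b) b))
    {p : ℝ × ℝ} (hp : p ∈ Icc (-b) b ×ˢ Icc (-b) b) :
    partialFst (Icc (-b) b) (oddSnd F) p = oddSnd (partialFst (Icc (-b) b) F) p := by
  have hF' := hF.differentiableOn one_ne_zero
  exact (uniqueDiffOn_Icc (by linarith) p.1 hp.1).eq_deriv _
    ((hF.oddSnd.differentiableOn one_ne_zero).hasDerivWithinAt_partialFst hp.1 hp.2)
    ((hF'.hasDerivWithinAt_partialFst hp.1 hp.2).sub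
      (hF'.hasDerivWithinAt_partialFst hp.1 (neg_mem_Icc_neg hp.2)))

theorem partialFst_partialFst_oddSnd (hb : 0 < b)
    (hF : ContDiffOn ℝ 2 F (Icc (-b) b ×ˢ Icc (-b) b)) {p : ℝ × ℝ}
    (hp : p ∈ Icc (-b) b ×ˢ Icc (-b) b) :
    partialFst (Icc (-b) b) (partialFst (Icc (-b) b) (oddSnd F)) p
      = oddSnd (partialFst (Icc (-b) b) (partialFst (Icc (-b) b) F)) p := by
  rw [partialFst_congr (fun _ hq => partialFst_oddSnd hb (hF.of_le one_le_two) hq) hp,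
    partialFst_oddSnd hb (hF.partialFst (uniqueDiffOn_Icc (by linarith))) hp]

theorem integral_partialSnd_sub_partialSnd_neg [CompleteSpace E] (hb : 0 < b)
    (hF : ContDiffOn ℝ 1 F (Icc (-b) b ×ˢ Icc (-b) b)) {x t y : ℝ} (hx : x ∈ Icc (-b) b)
    (ht : t ∈ Icc (-b) b) (hy : y ∈ Icc (-b) b) :
    ∫ s in t..y, (partialSnd (Icc (-b) b) F (x, s) - partialSnd (Icc (-b) b) F (x, -s))
      = (F (x, y) + F (x, -y)) - (F (x, t) + F (x, -t)) := by
  have hF' := hF.differentiableOn one_ne_zero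
  have hFt : ContinuousOn (fun s => partialSnd (Icc (-b) b) F (x, s)) (Icc (-b) b) :=
    (hF.partialSnd (n := 0) (uniqueDiffOn_Icc (by linarith))).continuousOn.uncurry_left
      (f := fun x s => partialSnd (Icc (-b) b) F (x, s)) x hx
  exact integral_eq_sub_of_hasDerivWithinAt_Icc (f := fun s => F (x, s) + F (x, -s)) ht hy
    (fun s hs => ((hF'.hasDerivWithinAt_partialSnd hx hs).add
      (hF'.hasDerivWithinAt_partialSnd_neg hx hs)).congr_deriv (sub_eq_add_neg _ _).symm)
    (hFt.sub (hFt.comp continuousOn_neg fun _ => neg_mem_Icc_neg))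

end SymmetricSquare

section Kernel

noncomputable def shiftedKernel {𝕜 : Type*} [RCLike 𝕜] (c : 𝕜) (K : ℝ → ℝ → 𝕜) (x t : ℝ) : 𝕜 :=
  c + K x t + c * ∫ s in t..x, (K x s - K x (-s))

theorem integral_shiftedKernel_mul {𝕜 : Type*} [RCLike 𝕜] (c : 𝕜) {K : ℝ → ℝ → 𝕜}
    {u : ℝ → 𝕜} {x : ℝ} (hK : ContinuousOn (K x) [[-x, x]]) (hu : ContinuousOn u [[-x, x]]) :
    ∫ t in (-x)..x, shiftedKernel c K x t * u t
      = c * (∫ s in (-x)..x, u s) + ∫ t in (-x)..x, K x t * (u t + c * ∫ s in (-t)..t, u s) := by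
  have hA : ContinuousOn (fun t => ∫ s in t..x, (K x s - K x (-s))) [[-x, x]] :=
    continuousOn_primitive_interval_left
      ((hK.sub (hK.comp continuousOn_neg (mapsTo_neg_uIcc x))).integrableOn_compact isCompact_uIcc)
  have hV := hu.integral_neg_self
  have hlhs : ∫ t in (-x)..x, shiftedKernel c K x t * u t
      = c * (∫ s in (-x)..x, u s) + ((∫ t in (-x)..x, K x t * u t)
          + c * ∫ t in (-x)..x, (∫ s in t..x, (K x s - K x (-s))) * u t) := by
    rw [← intervalIntegral.integral_const_mul, ← intervalIntegral.integral_const_mul,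
      ← intervalIntegral.integral_add, ← intervalIntegral.integral_add]
    · exact integral_congr fun t _ => by simp only [shiftedKernel]; ring
    all_goals apply ContinuousOn.intervalIntegrable; fun_prop
  have hrhs : ∫ t in (-x)..x, K x t * (u t + c * ∫ s in (-t)..t, u s)
      = (∫ t in (-x)..x, K x t * u t) + c * ∫ t in (-x)..x, K x t * ∫ s in (-t)..t, u s := by
    rw [← intervalIntegral.integral_const_mul, ← intervalIntegral.integral_add]
    · exact integral_congr fun t _ => by ring
    all_goals apply ContinuousOn.intervalIntegrable; fun_prop
  rw [hlhs, hrhs, integral_integral_sub_comp_neg_mul hK hu]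

variable {b : ℝ} {K : ℝ → ℝ → ℂ} {c : ℂ}

theorem d2x_eq_partialFst_partialFst (hb : 0 < b)
    (hK : ContDiffOn ℝ 2 (uncurry K) (Icc (-b) b ×ˢ Icc (-b) b)) {x t : ℝ}
    (hx : x ∈ Icc (-b) b) (ht : t ∈ Icc (-b) b) :
    d2x b K x t = partialFst (Icc (-b) b) (partialFst (Icc (-b) b) (uncurry K)) (x, t) := by
  have hI : UniqueDiffOn ℝ (Icc (-b) b) := uniqueDiffOn_Icc (by linarith)
  exact derivWithin_derivWithin_eq hI hx
    (fun y hy => (hK.differentiableOn two_ne_zero).hasDerivWithinAt_partialFst hy ht)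
    (((hK.partialFst (n := 1) hI).differentiableOn one_ne_zero).hasDerivWithinAt_partialFst hx ht)

theorem d2t_eq_partialSnd_partialSnd (hb : 0 < b)
    (hK : ContDiffOn ℝ 2 (uncurry K) (Icc (-b) b ×ˢ Icc (-b) b)) {x t : ℝ}
    (hx : x ∈ Icc (-b) b) (ht : t ∈ Icc (-b) b) :
    d2t b K x t = partialSnd (Icc (-b) b) (partialSnd (Icc (-b) b) (uncurry K)) (x, t) := by
  have hI : UniqueDiffOn ℝ (Icc (-b) b) := uniqueDiffOn_Icc (by linarith)
  exact derivWithin_derivWithin_eq hI ht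
    (fun y hy => (hK.differentiableOn two_ne_zero).hasDerivWithinAt_partialSnd hx hy)
    (((hK.partialSnd (n := 1) hI).differentiableOn one_ne_zero).hasDerivWithinAt_partialSnd hx ht)

theorem shiftedKernel_eq (hb : 0 < b) (hK : ContinuousOn (uncurry K) (Icc (-b) b ×ˢ Icc (-b) b))
    {x t : ℝ} (hx : x ∈ Icc (-b) b) (ht : t ∈ Icc (-b) b) :
    shiftedKernel c K x t = c + K x t + c * (primitiveSnd 0 (oddSnd (uncurry K)) (x, x)
      - primitiveSnd 0 (oddSnd (uncurry K)) (x, t)) := by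
  rw [primitiveSnd_sub_primitiveSnd (zero_mem_Icc_neg hb)
    ((contDiffOn_zero.2 hK).oddSnd.continuousOn) hx hx ht]
  rfl

theorem contDiffOn_shiftedKernel (hb : 0 < b)
    (hK : ContDiffOn ℝ 2 (uncurry K) (Icc (-b) b ×ˢ Icc (-b) b)) :
    ContDiffOn ℝ 2 (uncurry (shiftedKernel c K)) (Icc (-b) b ×ˢ Icc (-b) b) := by
  have hΦ := contDiffOn_primitiveSnd (by linarith) (zero_mem_Icc_neg hb) 2 hK.oddSnd
  refine ContDiffOn.congr ?_ fun p hp => shiftedKernel_eq hb hK.continuousOn hp.1 hp.2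
  exact (contDiffOn_const.add hK).add (contDiffOn_const.mul
    ((hΦ.comp (contDiff_fst.prodMk contDiff_fst).contDiffOn fun _ hp => ⟨hp.1, hp.1⟩).sub hΦ))

theorem hasDerivWithinAt_shiftedKernel_fst (hb : 0 < b)
    (hK : ContDiffOn ℝ 2 (uncurry K) (Icc (-b) b ×ˢ Icc (-b) b)) {x t : ℝ}
    (hx : x ∈ Icc (-b) b) (ht : t ∈ Icc (-b) b) :
    HasDerivWithinAt (shiftedKernel c K · t)
      (partialFst (Icc (-b) b) (uncurry K) (x, t) + c * (oddSnd (uncurry K) (x, x)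
        + ∫ s in t..x, partialFst (Icc (-b) b) (oddSnd (uncurry K)) (x, s))) (Icc (-b) b) x := by
  have hG1 := hK.oddSnd.of_le one_le_two
  have hΦ := fun p (hp : p ∈ Icc (-b) b ×ˢ Icc (-b) b) =>
    hasFDerivWithinAt_primitiveSnd (by linarith) hG1 (zero_mem_Icc_neg hb) hp
  have hdiag := (hΦ (x, x) ⟨hx, hx⟩).hasDerivWithinAt_comp_prodMk (hasDerivWithinAt_id x _)
    (hasDerivWithinAt_id x _) fun _ hy => ⟨hy, hy⟩
  have hslice := (hΦ (x, t) ⟨hx, ht⟩).hasDerivWithinAt_comp_prodMk (hasDerivWithinAt_id x _)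
    (hasDerivWithinAt_const x _ t) fun _ hy => ⟨hy, ht⟩
  have hKx := (hK.differentiableOn two_ne_zero).hasDerivWithinAt_partialFst hx ht
  refine (((hKx.const_add c).add ((hdiag.sub hslice).const_mul c)).congr_of_mem
    (fun y hy => shiftedKernel_eq hb hK.continuousOn hy ht) hx).congr_deriv ?_
  rw [← primitiveSnd_sub_primitiveSnd (zero_mem_Icc_neg hb)
    (hG1.partialFst (n := 0) (uniqueDiffOn_Icc (by linarith))).continuousOn hx hx ht]
  simp only [one_smul, zero_smul, add_zero]
  ring

theorem hasDerivWithinAt_shiftedKernel_snd (hb : 0 < b)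
    (hK : ContDiffOn ℝ 2 (uncurry K) (Icc (-b) b ×ˢ Icc (-b) b)) {x t : ℝ}
    (hx : x ∈ Icc (-b) b) (ht : t ∈ Icc (-b) b) :
    HasDerivWithinAt (shiftedKernel c K x)
      (partialSnd (Icc (-b) b) (uncurry K) (x, t) - c * oddSnd (uncurry K) (x, t))
      (Icc (-b) b) t := by
  have hslice := (hasFDerivWithinAt_primitiveSnd (by linarith) (hK.oddSnd.of_le one_le_two)
    (zero_mem_Icc_neg hb) ⟨hx, ht⟩).hasDerivWithinAt_comp_prodMk (hasDerivWithinAt_const t _ x)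
    (hasDerivWithinAt_id t _) fun _ hy => ⟨hx, hy⟩
  have hKt := (hK.differentiableOn two_ne_zero).hasDerivWithinAt_partialSnd hx ht
  refine (((hKt.const_add c).add (((hasDerivWithinAt_const t _ _).sub hslice).const_mul c)
    ).congr_of_mem (fun y hy => shiftedKernel_eq hb hK.continuousOn hx hy) ht).congr_deriv ?_
  simp only [one_smul, zero_smul, zero_add, id]
  ring

theorem d2x_shiftedKernel (hb : 0 < b)
    (hK : ContDiffOn ℝ 2 (uncurry K) (Icc (-b) b ×ˢ Icc (-b) b)) {x t : ℝ} {g : ℂ}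
    (hg : HasDerivWithinAt (fun y => oddSnd (uncurry K) (y, y)) g (Icc (-b) b) x)
    (hx : x ∈ Icc (-b) b) (ht : t ∈ Icc (-b) b) :
    d2x b (shiftedKernel c K) x t
      = partialFst (Icc (-b) b) (partialFst (Icc (-b) b) (uncurry K)) (x, t)
        + c * (g + partialFst (Icc (-b) b) (oddSnd (uncurry K)) (x, x)
          + ∫ s in t..x, partialFst (Icc (-b) b) (partialFst (Icc (-b) b) (oddSnd (uncurry K)))
            (x, s)) := by
  have hI : UniqueDiffOn ℝ (Icc (-b) b) := uniqueDiffOn_Icc (by linarith)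
  have hGx := hK.oddSnd.partialFst (n := 1) hI
  have hΨ := fun p (hp : p ∈ Icc (-b) b ×ˢ Icc (-b) b) =>
    hasFDerivWithinAt_primitiveSnd (by linarith) hGx (zero_mem_Icc_neg hb) hp
  have hdiag := (hΨ (x, x) ⟨hx, hx⟩).hasDerivWithinAt_comp_prodMk (hasDerivWithinAt_id x _)
    (hasDerivWithinAt_id x _) fun _ hy => ⟨hy, hy⟩
  have hslice := (hΨ (x, t) ⟨hx, ht⟩).hasDerivWithinAt_comp_prodMk (hasDerivWithinAt_id x _)
    (hasDerivWithinAt_const x _ t) fun _ hy => ⟨hy, ht⟩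
  have hKxx :=
    ((hK.partialFst (n := 1) hI).differentiableOn one_ne_zero).hasDerivWithinAt_partialFst hx ht
  refine derivWithin_derivWithin_eq hI hx
    (fun y hy => hasDerivWithinAt_shiftedKernel_fst hb hK hy ht)
    (((hKxx.add (((hg.add hdiag).sub hslice).const_mul c)).congr_of_mem (fun y hy => ?_) hx
      ).congr_deriv ?_)
  · rw [← primitiveSnd_sub_primitiveSnd (zero_mem_Icc_neg hb) hGx.continuousOn hy hy ht]
    simp only [Pi.add_apply, Pi.sub_apply, id]
    ring
  · rw [← primitiveSnd_sub_primitiveSnd (zero_mem_Icc_neg hb)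
      (hGx.partialFst (n := 0) hI).continuousOn hx hx ht]
    simp only [one_smul, zero_smul, add_zero]
    ring

theorem d2t_shiftedKernel (hb : 0 < b)
    (hK : ContDiffOn ℝ 2 (uncurry K) (Icc (-b) b ×ˢ Icc (-b) b)) {x t : ℝ}
    (hx : x ∈ Icc (-b) b) (ht : t ∈ Icc (-b) b) :
    d2t b (shiftedKernel c K) x t
      = partialSnd (Icc (-b) b) (partialSnd (Icc (-b) b) (uncurry K)) (x, t)
        - c * (partialSnd (Icc (-b) b) (uncurry K) (x, t)
          + partialSnd (Icc (-b) b) (uncurry K) (x, -t)) := by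
  have hI : UniqueDiffOn ℝ (Icc (-b) b) := uniqueDiffOn_Icc (by linarith)
  have hK1 := hK.differentiableOn two_ne_zero
  have hKtt :=
    ((hK.partialSnd (n := 1) hI).differentiableOn one_ne_zero).hasDerivWithinAt_partialSnd hx ht
  refine derivWithin_derivWithin_eq hI ht
    (fun y hy => hasDerivWithinAt_shiftedKernel_snd hb hK hx hy)
    ((hKtt.sub (((hK1.hasDerivWithinAt_partialSnd hx ht).sub
      (hK1.hasDerivWithinAt_partialSnd_neg hx ht)).const_mul c)).congr_deriv ?_)
  rw [sub_neg_eq_add]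

theorem integral_partialFst_partialFst_oddSnd (hb : 0 < b)
    (hK : ContDiffOn ℝ 2 (uncurry K) (Icc (-b) b ×ˢ Icc (-b) b)) {μ : ℂ} {x t : ℝ}
    (hpde : ∀ s ∈ Icc (-b) b, partialFst (Icc (-b) b) (partialFst (Icc (-b) b) (uncurry K)) (x, s)
      - μ * K x s = partialSnd (Icc (-b) b) (partialSnd (Icc (-b) b) (uncurry K)) (x, s))
    (hx : x ∈ Icc (-b) b) (ht : t ∈ Icc (-b) b) :
    ∫ s in t..x, partialFst (Icc (-b) b) (partialFst (Icc (-b) b) (oddSnd (uncurry K))) (x, s)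
      = μ * (∫ s in t..x, (K x s - K x (-s)))
        + ((partialSnd (Icc (-b) b) (uncurry K) (x, x)
            + partialSnd (Icc (-b) b) (uncurry K) (x, -x))
          - (partialSnd (Icc (-b) b) (uncurry K) (x, t)
            + partialSnd (Icc (-b) b) (uncurry K) (x, -t))) := by
  set I := Icc (-b) b
  have hI : UniqueDiffOn ℝ I := uniqueDiffOn_Icc (by linarith)
  have hneg : MapsTo Neg.neg I I := fun _ => neg_mem_Icc_neg
  have hsub : [[t, x]] ⊆ I := uIcc_subset_Icc ht hx
  have hKslice : ContinuousOn (K x) I := hK.continuousOn.uncurry_left x hx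
  have hKtt : ContinuousOn (fun s => partialSnd I (partialSnd I (uncurry K)) (x, s)) I :=
    ((hK.partialSnd (n := 1) hI).partialSnd (n := 0) hI).continuousOn.uncurry_left
      (f := fun x s => partialSnd I (partialSnd I (uncurry K)) (x, s)) x hx
  have hGxx : ∀ s ∈ [[t, x]], partialFst I (partialFst I (oddSnd (uncurry K))) (x, s)
      = μ * (K x s - K x (-s)) + (partialSnd I (partialSnd I (uncurry K)) (x, s)
        - partialSnd I (partialSnd I (uncurry K)) (x, -s)) := fun s hs => by
    rw [partialFst_partialFst_oddSnd hb hK ⟨hx, hsub hs⟩, oddSnd]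
    linear_combination hpde s (hsub hs) - hpde (-s) (neg_mem_Icc_neg (hsub hs))
  rw [integral_congr hGxx, intervalIntegral.integral_add, intervalIntegral.integral_const_mul,
    integral_partialSnd_sub_partialSnd_neg hb (hK.partialSnd hI) hx ht hx]
  · exact ((continuousOn_const.mul (hKslice.sub (hKslice.comp continuousOn_neg hneg))).mono
      hsub).intervalIntegrable
  · exact ((hKtt.sub (hKtt.comp continuousOn_neg hneg)).mono hsub).intervalIntegrable

variable {q : ℝ → ℂ} {h : ℂ}

theorem shiftedKernel_pde (hb : 0 < b) (hq : ContinuousOn q (Icc (-b) b))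
    (hK : IsTransmutationKernel b q h K) {x t : ℝ} (hx : x ∈ Icc (-b) b) (ht : t ∈ Icc (-b) b) :
    d2x b (shiftedKernel c K) x t - q x * shiftedKernel c K x t
      = d2t b (shiftedKernel c K) x t := by
  obtain ⟨hK2, hpde, hdiag, hanti⟩ := hK
  replace hK2 : ContDiffOn ℝ 2 (uncurry K) (Icc (-b) b ×ˢ Icc (-b) b) := hK2
  have hK1 := hK2.differentiableOn two_ne_zero
  have hpde' : ∀ s ∈ Icc (-b) b,
      partialFst (Icc (-b) b) (partialFst (Icc (-b) b) (uncurry K)) (x, s) - q x * K x s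
        = partialSnd (Icc (-b) b) (partialSnd (Icc (-b) b) (uncurry K)) (x, s) := fun s hs => by
    rw [← d2x_eq_partialFst_partialFst hb hK2 hx hs, ← d2t_eq_partialSnd_partialSnd hb hK2 hx hs]
    exact hpde x hx s hs
  have hdiag' : HasDerivWithinAt (fun y => K y y) (1 / 2 * q x) (Icc (-b) b) x :=
    (((hq.hasDerivWithinAt_integral (zero_mem_Icc_neg hb) hx).const_mul (1 / 2)).const_add
      (h / 2)).congr_of_mem hdiag hx
  have hanti' : HasDerivWithinAt (fun y => K y (-y)) 0 (Icc (-b) b) x :=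
    (hasDerivWithinAt_const x _ (h / 2)).congr_of_mem hanti hx
  have hsumDiag := partialFst_add_partialSnd_eq_of_hasDerivWithinAt hb hK1 hx hdiag'
  have hdiffAnti := partialFst_sub_partialSnd_eq_of_hasDerivWithinAt hb hK1 hx hanti'
  have hGxDiag := partialFst_oddSnd hb (hK2.of_le one_le_two) (p := (x, x)) ⟨hx, hx⟩
  have hGxxInt := integral_partialFst_partialFst_oddSnd hb hK2 hpde' hx ht
  simp only [oddSnd] at hGxDiag
  rw [d2x_shiftedKernel hb hK2 (hdiag'.sub hanti') hx ht, d2t_shiftedKernel hb hK2 hx ht,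
    shiftedKernel]
  linear_combination hpde' t ht + c * hGxxInt + c * hGxDiag + c * hsumDiag - c * hdiffAnti

theorem IsTransmutationKernel.shiftedKernel (hb : 0 < b) (hq : ContinuousOn q (Icc (-b) b))
    (hK : IsTransmutationKernel b q h K) (h' : ℂ) :
    IsTransmutationKernel b q h' (shiftedKernel ((h' - h) / 2) K) := by
  refine ⟨contDiffOn_shiftedKernel hb hK.1, fun x hx t ht => shiftedKernel_pde hb hq hK hx ht,
    fun x hx => ?_, fun x hx => ?_⟩
  · rw [_root_.shiftedKernel, integral_same, hK.2.2.1 x hx]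
    ring
  · rw [_root_.shiftedKernel, integral_sub_comp_neg_eq_zero, hK.2.2.2 x hx]
    ring

end Kernel

/-- change of the parameter `h` in the transmutation kernel. If `K₁` is a
transmutation kernel for `(q,h₁)`, then
`K₂(x,t) = (h₂−h₁)/2 + K₁(x,t) + ((h₂−h₁)/2)∫_t^x (K₁(x,s) − K₁(x,−s)) ds`
is a transmutation kernel for `(q,h₂)`, and the corresponding operators are related by
`T_{h₂} u = T_{h₁} w` with `w(t) = u(t) + ((h₂−h₁)/2)∫_{−t}^t u(s) ds`. -/
theorem kernel_change_of_h
    (b : ℝ) (hb : 0 < b) (q : ℝ → ℂ) (hq : ContDiffOn ℝ 1 q (Set.Icc (-b) b))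
    (h₁ h₂ : ℂ) (K₁ : ℝ → ℝ → ℂ) (hK₁ : IsTransmutationKernel b q h₁ K₁) :
    IsTransmutationKernel b q h₂
      (fun x t => (h₂ - h₁) / 2 + K₁ x t
        + (h₂ - h₁) / 2 * ∫ s in t..x, (K₁ x s - K₁ x (-s))) ∧
    ∀ u : ℝ → ℂ, ContinuousOn u (Set.Icc (-b) b) → ∀ x ∈ Set.Icc (-b) b,
      u x + (∫ t in (-x)..x,
          ((h₂ - h₁) / 2 + K₁ x t + (h₂ - h₁) / 2 * ∫ s in t..x, (K₁ x s - K₁ x (-s))) * u t)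
        = (u x + (h₂ - h₁) / 2 * ∫ s in (-x)..x, u s)
          + ∫ t in (-x)..x, K₁ x t * (u t + (h₂ - h₁) / 2 * ∫ s in (-t)..t, u s) := by
  refine ⟨hK₁.shiftedKernel hb hq.continuousOn h₂, fun u hu x hx => ?_⟩
  have hsub : [[-x, x]] ⊆ Icc (-b) b := uIcc_subset_Icc (neg_mem_Icc_neg hx) hx
  rw [add_assoc]
  exact congrArg (u x + ·) (integral_shiftedKernel_mul _
    ((hK₁.1.continuousOn.uncurry_left x hx).mono hsub) (hu.mono hsub))
end

section
/- The systems {c_n}_{n=0}^∞ and {s_n}_{n=1}^∞ are linearly independent over ℂ as functions on [-b,b]: if N ∈ ℕ and a₀,…,a_N ∈ ℂ satisfy Σ_{n=0}^N a_n·c_n(x) = 0 for all x ∈ [-b,b], then a₀ = … = a_N = 0; likewise, if b₁,…,b_N ∈ ℂ satisfy Σ_{n=1}^N b_n·s_n(x) = 0 for all x ∈ [-b,b], then b₁ = … = b_N = 0. -/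
open Set MeasureTheory Filter

/-- The recursive integrals `X⁽⁰⁾ ≡ 1`, `X⁽ⁿ⁾(x) = n ∫_{x₀}^x X⁽ⁿ⁻¹⁾(s) (f(s)²)^((−1)ⁿ) ds`. -/
noncomputable def Xrec (x₀ : ℝ) (f : ℝ → ℂ) : ℕ → ℝ → ℂ
  | 0 => fun _ => 1
  | n + 1 => fun x => ((n : ℂ) + 1) * ∫ s in x₀..x, Xrec x₀ f n s * (f s ^ 2) ^ ((-1 : ℤ) ^ (n + 1))

/-- The recursive integrals `X̃⁽⁰⁾ ≡ 1`, `X̃⁽ⁿ⁾(x) = n ∫_{x₀}^x X̃⁽ⁿ⁻¹⁾(s) (f(s)²)^((−1)^(n−1)) ds`. -/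
noncomputable def Xtrec (x₀ : ℝ) (f : ℝ → ℂ) : ℕ → ℝ → ℂ
  | 0 => fun _ => 1
  | n + 1 => fun x => ((n : ℂ) + 1) * ∫ s in x₀..x, Xtrec x₀ f n s * (f s ^ 2) ^ ((-1 : ℤ) ^ n)

/-- `φ_k = f·X⁽ᵏ⁾` for odd `k`, `φ_k = f·X̃⁽ᵏ⁾` for even `k`. -/
noncomputable def phiF (x₀ : ℝ) (f : ℝ → ℂ) (k : ℕ) (x : ℝ) : ℂ :=
  if Odd k then f x * Xrec x₀ f k x else f x * Xtrec x₀ f k x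

/-- `ψ_k = X̃⁽ᵏ⁾/f` for odd `k`, `ψ_k = X⁽ᵏ⁾/f` for even `k`. -/
noncomputable def psiF (x₀ : ℝ) (f : ℝ → ℂ) (k : ℕ) (x : ℝ) : ℂ :=
  if Odd k then Xtrec x₀ f k x / f x else Xrec x₀ f k x / f x

/-- The generalized wave polynomial `u_{2m−1}(x,t) = Σ_{even k≤m} C(m,k) φ_{m−k}(x) tᵏ`. -/
noncomputable def uA (x₀ : ℝ) (f : ℝ → ℂ) (m : ℕ) (x t : ℝ) : ℂ :=
  ∑ k ∈ Finset.range (m + 1),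
    if Even k then (Nat.choose m k : ℂ) * phiF x₀ f (m - k) x * (t : ℂ) ^ k else 0

/-- The generalized wave polynomial `u_{2m}(x,t) = Σ_{odd k≤m} C(m,k) φ_{m−k}(x) tᵏ`. -/
noncomputable def uB (x₀ : ℝ) (f : ℝ → ℂ) (m : ℕ) (x t : ℝ) : ℂ :=
  ∑ k ∈ Finset.range (m + 1),
    if Odd k then (Nat.choose m k : ℂ) * phiF x₀ f (m - k) x * (t : ℂ) ^ k else 0

/-- The trace `c_m(x) = u_{2m−1}(x,x)` (with `c₀ = f`). -/
noncomputable def cTrace (x₀ : ℝ) (f : ℝ → ℂ) (m : ℕ) (x : ℝ) : ℂ := uA x₀ f m x x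

/-- The trace `s_m(x) = u_{2m}(x,x)`. -/
noncomputable def sTrace (x₀ : ℝ) (f : ℝ → ℂ) (m : ℕ) (x : ℝ) : ℂ := uB x₀ f m x x

/-
Near `0⁺` every `X⁽ⁿ⁾` and `X̃⁽ⁿ⁾` is asymptotically equivalent to `xⁿ`: the weights `(f²)^(±1)`
tend to `f(0)² = 1`, and integrating `sⁿ(1 + o(1))` from `0` to `x` gives `xⁿ⁺¹(1 + o(1))/(n+1)`.
Hence `φ_k(x) ~ xᵏ`, and `c_m(x)`, `s_m(x)` are equivalent to `L·xᵐ`, where `L` is a sum of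
binomial coefficients over even (resp. odd) indices, nonzero (for `s_m` because `m ≥ 1`).
Functions with pairwise distinct orders of vanishing are linearly independent: in a vanishing
combination, the nonzero term of lowest order would dominate all the others.
-/

open Set MeasureTheory Filter Topology Asymptotics

theorem eq_zero_of_eventually_sum_mul_eq_zero {α 𝕜 : Type*} [NormedField 𝕜] {l : Filter α}
    {F : Finset ℕ} {T : ℕ → α → 𝕜} (hT : ∀ m ∈ F, ∀ n ∈ F, m < n → T n =o[l] T m)
    (hne : ∀ n ∈ F, ∃ᶠ x in l, T n x ≠ 0) {a : ℕ → 𝕜}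
    (ha : ∀ᶠ x in l, ∑ n ∈ F, a n * T n x = 0) : ∀ n ∈ F, a n = 0 := by
  intro m
  induction m using Nat.strong_induction_on with
  | _ m IH =>
  intro hm
  by_contra ham
  have hrest : (fun x => ∑ n ∈ F.erase m, a n * T n x) =o[l] T m := by
    have := IsLittleO.sum (s := F.erase m) (A := fun n x => a n * T n x) (g' := T m)
      fun n hn => by
        rcases lt_or_gt_of_ne (Finset.ne_of_mem_erase hn) with hlt | hgt
        · simp [IH n hlt (Finset.mem_of_mem_erase hn)]
        · exact (hT m hm n (Finset.mem_of_mem_erase hn) hgt).const_mul_left (a n)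
    simpa only [Finset.sum_fn] using this
  have hlead : (fun x => a m * T m x) =o[l] T m := by
    refine hrest.neg_left.congr' (ha.mono fun x hx => ?_) EventuallyEq.rfl
    rw [← Finset.add_sum_erase F _ hm] at hx
    simp only
    linear_combination -hx
  exact isLittleO_irrefl (hne m hm) ((isLittleO_const_mul_left_iff ham).mp hlead)

theorem Asymptotics.IsEquivalent.sum_const_mul {ι α 𝕜 : Type*} [NormedField 𝕜] {l : Filter α}
    {s : Finset ι} {T : ι → α → 𝕜} {c : ι → 𝕜} {g : α → 𝕜}
    (hT : ∀ i ∈ s, T i ~[l] fun x => c i * g x) (hc : ∑ i ∈ s, c i ≠ 0) :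
    (fun x => ∑ i ∈ s, T i x) ~[l] fun x => (∑ i ∈ s, c i) * g x := by
  have hsum := IsLittleO.sum (s := s) (A := fun i x => T i x - c i * g x) (g' := g)
    fun i hi => (hT i hi).isLittleO.trans_isBigO (isBigO_const_mul_self (c i) g l)
  have : (fun x => ∑ i ∈ s, T i x - (∑ i ∈ s, c i) * g x) =o[l] g := by
    simpa only [Finset.sum_fn, Finset.sum_sub_distrib, Finset.sum_mul] using hsum
  exact this.trans_isBigO (isBigO_self_const_mul hc g l)

theorem isLittleO_ofReal_pow_pow {m n : ℕ} (h : m < n) :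
    (fun x : ℝ => (x : ℂ) ^ n) =o[𝓝[>] 0] fun x => (x : ℂ) ^ m :=
  (isLittleO_pow_pow h).comp_tendsto
    ((Complex.continuous_ofReal.tendsto' 0 0 Complex.ofReal_zero).mono_left nhdsWithin_le_nhds)

theorem eq_zero_of_eventually_sum_mul_eq_zero_of_isEquivalent_pow {F : Finset ℕ}
    {T : ℕ → ℝ → ℂ} {L : ℕ → ℂ} (hT : ∀ n ∈ F, T n ~[𝓝[>] 0] fun x => L n * (x : ℂ) ^ n)
    (hL : ∀ n ∈ F, L n ≠ 0) {a : ℕ → ℂ} (ha : ∀ᶠ x in 𝓝[>] 0, ∑ n ∈ F, a n * T n x = 0) :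
    ∀ n ∈ F, a n = 0 := by
  refine eq_zero_of_eventually_sum_mul_eq_zero (fun m hm n hn hmn => ?_) (fun n hn => ?_) ha
  · exact (hT n hn).isBigO.trans_isLittleO
      (((isLittleO_ofReal_pow_pow hmn).const_mul_left (L n)).const_mul_right (hL m hm))
      |>.trans_isBigO (hT m hm).isBigO_symm
  · have hpow : ∀ᶠ x : ℝ in 𝓝[>] 0, L n * (x : ℂ) ^ n ≠ 0 := by
      filter_upwards [self_mem_nhdsWithin] with x (hx : 0 < x)
      exact mul_ne_zero (hL n hn) (pow_ne_zero _ (Complex.ofReal_ne_zero.mpr hx.ne'))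
    exact (((hT n hn).isBigO_symm.eq_zero_imp.and hpow).mono
      fun x hx h0 => hx.2 (hx.1 h0)).frequently

theorem isLittleO_primitive_of_isLittleO_pow {v : ℝ → ℂ} {n : ℕ}
    (hv : v =o[𝓝[>] 0] fun x => (x : ℂ) ^ n) :
    (fun x => ∫ s in (0 : ℝ)..x, v s) =o[𝓝[>] 0] fun x => (x : ℂ) ^ (n + 1) := by
  refine IsLittleO.of_bound fun c hc => ?_
  obtain ⟨δ, hδ, hsub⟩ := mem_nhdsGT_iff_exists_Ioo_subset.mp (hv.bound hc)
  filter_upwards [Ioo_mem_nhdsGT hδ] with x hx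
  have hbound : ∀ s ∈ uIoc 0 x, ‖v s‖ ≤ c * x ^ n := fun s hs => by
    rw [uIoc_of_le hx.1.le] at hs
    calc ‖v s‖ ≤ c * ‖(s : ℂ) ^ n‖ := hsub ⟨hs.1, hs.2.trans_lt hx.2⟩
      _ ≤ c * x ^ n := by
        rw [norm_pow, Complex.norm_real, Real.norm_of_nonneg hs.1.le]
        exact mul_le_mul_of_nonneg_left (pow_le_pow_left₀ hs.1.le hs.2 n) hc.le
  calc ‖∫ s in (0 : ℝ)..x, v s‖ ≤ c * x ^ n * |x - 0| :=
        intervalIntegral.norm_integral_le_of_norm_le_const hbound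
    _ = c * ‖(x : ℂ) ^ (n + 1)‖ := by
        rw [norm_pow, Complex.norm_real, Real.norm_of_nonneg hx.1.le, sub_zero,
          abs_of_pos hx.1]
        ring

theorem integral_ofReal_pow (x : ℝ) (n : ℕ) :
    ∫ s in (0 : ℝ)..x, (s : ℂ) ^ n = (x : ℂ) ^ (n + 1) / ((n : ℂ) + 1) := by
  have : ∫ s in (0 : ℝ)..x, (s : ℂ) ^ n = ((∫ s in (0 : ℝ)..x, s ^ n : ℝ) : ℂ) := by
    rw [← intervalIntegral.integral_ofReal]
    push_cast
    rfl
  rw [this, integral_pow]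
  push_cast
  ring

theorem Asymptotics.IsEquivalent.const_mul_primitive_pow {u : ℝ → ℂ} {n : ℕ}
    (hu : ∀ᶠ x in 𝓝[>] 0, IntervalIntegrable u volume 0 x)
    (h : u ~[𝓝[>] 0] fun x => (x : ℂ) ^ n) :
    (fun x => ((n : ℂ) + 1) * ∫ s in (0 : ℝ)..x, u s) ~[𝓝[>] 0] fun x => (x : ℂ) ^ (n + 1) := by
  refine ((isLittleO_primitive_of_isLittleO_pow h.isLittleO).const_mul_left
    ((n : ℂ) + 1)).congr' ?_ EventuallyEq.rfl
  filter_upwards [hu] with x hx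
  have hpow : IntervalIntegrable (fun s : ℝ => (s : ℂ) ^ n) volume 0 x :=
    (Complex.continuous_ofReal.pow n).intervalIntegrable _ _
  have hn : (n : ℂ) + 1 ≠ 0 := Nat.cast_add_one_ne_zero n
  simp only [Pi.sub_apply]
  rw [intervalIntegral.integral_sub hx hpow, integral_ofReal_pow]
  field_simp

theorem continuousOn_primitive_Icc {b : ℝ} (hb : 0 < b) {u : ℝ → ℂ}
    (hu : ContinuousOn u (Icc (-b) b)) :
    ContinuousOn (fun x => ∫ s in (0 : ℝ)..x, u s) (Icc (-b) b) := by
  have hI : Icc (-b) b = uIcc (-b) b := (uIcc_of_le (by linarith)).symm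
  rw [hI] at hu ⊢
  exact intervalIntegral.continuousOn_primitive_interval' hu.intervalIntegrable
    (by rw [← hI]; constructor <;> linarith)

theorem isEquivalent_one_of_continuousOn {b : ℝ} (hb : 0 < b) {w : ℝ → ℂ}
    (hw : ContinuousOn w (Icc (-b) b)) (hw0 : w 0 = 1) :
    w ~[𝓝[>] 0] Function.const ℝ 1 := by
  rw [isEquivalent_const_iff_tendsto one_ne_zero, ← hw0]
  exact (hw.continuousAt (Icc_mem_nhds (by linarith) hb)).tendsto.mono_left nhdsWithin_le_nhds

theorem Asymptotics.IsEquivalent.const_mul_primitive_mul {b : ℝ} (hb : 0 < b) {Y w : ℝ → ℂ} {n : ℕ}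
    (hY : ContinuousOn Y (Icc (-b) b)) (hw : ContinuousOn w (Icc (-b) b)) (hw0 : w 0 = 1)
    (hYn : Y ~[𝓝[>] 0] fun x => (x : ℂ) ^ n) :
    (fun x => ((n : ℂ) + 1) * ∫ s in (0 : ℝ)..x, Y s * w s) ~[𝓝[>] 0]
      fun x => (x : ℂ) ^ (n + 1) := by
  refine IsEquivalent.const_mul_primitive_pow (u := Y * w) ?_
    (by simpa using hYn.mul (isEquivalent_one_of_continuousOn hb hw hw0))
  filter_upwards [Ioo_mem_nhdsGT hb] with x hx
  refine ((hY.mul hw).mono ?_).intervalIntegrable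
  rw [uIcc_of_le hx.1.le]
  exact Icc_subset_Icc (by linarith) hx.2.le

section RecursiveIntegrals

variable {b : ℝ} {f : ℝ → ℂ}

theorem continuousOn_sq_zpow (hf : ContinuousOn f (Icc (-b) b))
    (hfne : ∀ x ∈ Icc (-b) b, f x ≠ 0) (e : ℤ) :
    ContinuousOn (fun s => (f s ^ 2) ^ e) (Icc (-b) b) :=
  (hf.pow 2).zpow₀ e fun x hx => Or.inl (pow_ne_zero 2 (hfne x hx))

theorem continuousOn_Xrec (hb : 0 < b) (hf : ContinuousOn f (Icc (-b) b))
    (hfne : ∀ x ∈ Icc (-b) b, f x ≠ 0) : ∀ n, ContinuousOn (Xrec 0 f n) (Icc (-b) b)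
  | 0 => continuousOn_const
  | n + 1 => continuousOn_const.mul <| continuousOn_primitive_Icc hb <|
      (continuousOn_Xrec hb hf hfne n).mul (continuousOn_sq_zpow hf hfne _)

theorem continuousOn_Xtrec (hb : 0 < b) (hf : ContinuousOn f (Icc (-b) b))
    (hfne : ∀ x ∈ Icc (-b) b, f x ≠ 0) : ∀ n, ContinuousOn (Xtrec 0 f n) (Icc (-b) b)
  | 0 => continuousOn_const
  | n + 1 => continuousOn_const.mul <| continuousOn_primitive_Icc hb <|
      (continuousOn_Xtrec hb hf hfne n).mul (continuousOn_sq_zpow hf hfne _)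

theorem isEquivalent_Xrec (hb : 0 < b) (hf : ContinuousOn f (Icc (-b) b))
    (hfne : ∀ x ∈ Icc (-b) b, f x ≠ 0) (hf0 : f 0 = 1) :
    ∀ n, Xrec 0 f n ~[𝓝[>] 0] fun x => (x : ℂ) ^ n
  | 0 => by simpa [Xrec] using IsEquivalent.refl
  | n + 1 => IsEquivalent.const_mul_primitive_mul hb (continuousOn_Xrec hb hf hfne n)
      (continuousOn_sq_zpow hf hfne _) (by simp [hf0]) (isEquivalent_Xrec hb hf hfne hf0 n)

theorem isEquivalent_Xtrec (hb : 0 < b) (hf : ContinuousOn f (Icc (-b) b))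
    (hfne : ∀ x ∈ Icc (-b) b, f x ≠ 0) (hf0 : f 0 = 1) :
    ∀ n, Xtrec 0 f n ~[𝓝[>] 0] fun x => (x : ℂ) ^ n
  | 0 => by simpa [Xtrec] using IsEquivalent.refl
  | n + 1 => IsEquivalent.const_mul_primitive_mul hb (continuousOn_Xtrec hb hf hfne n)
      (continuousOn_sq_zpow hf hfne _) (by simp [hf0]) (isEquivalent_Xtrec hb hf hfne hf0 n)

theorem isEquivalent_phiF (hb : 0 < b) (hf : ContinuousOn f (Icc (-b) b))
    (hfne : ∀ x ∈ Icc (-b) b, f x ≠ 0) (hf0 : f 0 = 1) (k : ℕ) :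
    phiF 0 f k ~[𝓝[>] 0] fun x => (x : ℂ) ^ k := by
  have hf1 := isEquivalent_one_of_continuousOn hb hf hf0
  unfold phiF
  split_ifs
  · simpa [Pi.mul_def] using hf1.mul (isEquivalent_Xrec hb hf hfne hf0 k)
  · simpa [Pi.mul_def] using hf1.mul (isEquivalent_Xtrec hb hf hfne hf0 k)

theorem isEquivalent_sum_choose_mul_phiF (hb : 0 < b) (hf : ContinuousOn f (Icc (-b) b))
    (hfne : ∀ x ∈ Icc (-b) b, f x ≠ 0) (hf0 : f 0 = 1) (p : ℕ → Prop) [DecidablePred p]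
    (m : ℕ) (hp : ∑ k ∈ Finset.range (m + 1), (if p k then (m.choose k : ℂ) else 0) ≠ 0) :
    (fun x => ∑ k ∈ Finset.range (m + 1),
        if p k then (m.choose k : ℂ) * phiF 0 f (m - k) x * (x : ℂ) ^ k else 0) ~[𝓝[>] 0]
      fun x => (∑ k ∈ Finset.range (m + 1), if p k then (m.choose k : ℂ) else 0) * (x : ℂ) ^ m := by
  refine IsEquivalent.sum_const_mul (fun k hk => ?_) hp
  split_ifs
  · have hkm : m - k + k = m := Nat.sub_add_cancel (Nat.lt_succ_iff.mp (Finset.mem_range.mp hk))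
    have := ((IsEquivalent.refl (u := fun _ : ℝ => (m.choose k : ℂ))).mul
      (isEquivalent_phiF hb hf hfne hf0 (m - k))).mul
      (IsEquivalent.refl (u := fun x : ℝ => (x : ℂ) ^ k))
    simpa [Pi.mul_def, mul_assoc, ← pow_add, hkm] using this
  · simpa using IsEquivalent.refl

end RecursiveIntegrals

theorem sum_range_choose_ite_ne_zero {p : ℕ → Prop} [DecidablePred p] {m k : ℕ} (hk : k ≤ m)
    (hp : p k) : ∑ i ∈ Finset.range (m + 1), (if p i then (m.choose i : ℂ) else 0) ≠ 0 := by
  have hpos : 0 < ∑ i ∈ Finset.range (m + 1), if p i then m.choose i else 0 :=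
    lt_of_lt_of_le (by simpa [hp] using Nat.choose_pos hk)
      (Finset.single_le_sum (f := fun i => if p i then m.choose i else 0)
        (fun i _ => Nat.zero_le _) (Finset.mem_range.mpr (Nat.lt_succ_of_le hk)))
  exact_mod_cast hpos.ne'

theorem cTrace_sTrace_linearly_independent_general
    (b : ℝ) (hb : 0 < b)
    (f : ℝ → ℂ) (hf : ContDiffOn ℝ 2 f (Set.Icc (-b) b))
    (hfne : ∀ x ∈ Set.Icc (-b) b, f x ≠ 0) (hf0 : f 0 = 1) (N : ℕ) :
    (∀ a : ℕ → ℂ,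
      (∀ x ∈ Set.Icc (-b) b, ∑ n ∈ Finset.range (N + 1), a n * cTrace 0 f n x = 0) →
      ∀ n ∈ Finset.range (N + 1), a n = 0) ∧
    (∀ bc : ℕ → ℂ,
      (∀ x ∈ Set.Icc (-b) b, ∑ n ∈ Finset.Icc 1 N, bc n * sTrace 0 f n x = 0) →
      ∀ n ∈ Finset.Icc 1 N, bc n = 0) := by
  have hfc := hf.continuousOn
  have hnear : ∀ {P : ℝ → Prop}, (∀ x ∈ Icc (-b) b, P x) → ∀ᶠ x in 𝓝[>] 0, P x :=
    fun h => by
      filter_upwards [Ioo_mem_nhdsGT hb] with x hx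
      exact h x ⟨by linarith [hx.1], hx.2.le⟩
  refine ⟨fun a ha => ?_, fun bc hbc => ?_⟩
  · exact eq_zero_of_eventually_sum_mul_eq_zero_of_isEquivalent_pow
      (fun n _ => isEquivalent_sum_choose_mul_phiF hb hfc hfne hf0 Even n
        (sum_range_choose_ite_ne_zero n.zero_le Even.zero))
      (fun n _ => sum_range_choose_ite_ne_zero n.zero_le Even.zero) (hnear ha)
  · exact eq_zero_of_eventually_sum_mul_eq_zero_of_isEquivalent_pow
      (fun n hn => isEquivalent_sum_choose_mul_phiF hb hfc hfne hf0 Odd n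
        (sum_range_choose_ite_ne_zero (Finset.mem_Icc.mp hn).1 odd_one))
      (fun n hn => sum_range_choose_ite_ne_zero (Finset.mem_Icc.mp hn).1 odd_one) (hnear hbc)

/-- linear independence of the systems `{c_n}_{n≥0}` and `{s_n}_{n≥1}` on
`[-b,b]`. -/
theorem cTrace_sTrace_linearly_independent
    (b : ℝ) (hb : 0 < b) (q : ℝ → ℂ) (hq : ContinuousOn q (Set.Icc (-b) b))
    (f : ℝ → ℂ) (hf : ContDiffOn ℝ 2 f (Set.Icc (-b) b))
    (hfeq : ∀ x ∈ Set.Icc (-b) b,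
      derivWithin (derivWithin f (Set.Icc (-b) b)) (Set.Icc (-b) b) x = q x * f x)
    (hfne : ∀ x ∈ Set.Icc (-b) b, f x ≠ 0) (hf0 : f 0 = 1) (N : ℕ) :
    (∀ a : ℕ → ℂ,
      (∀ x ∈ Set.Icc (-b) b, ∑ n ∈ Finset.range (N + 1), a n * cTrace 0 f n x = 0) →
      ∀ n ∈ Finset.range (N + 1), a n = 0) ∧
    (∀ bc : ℕ → ℂ,
      (∀ x ∈ Set.Icc (-b) b, ∑ n ∈ Finset.Icc 1 N, bc n * sTrace 0 f n x = 0) →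
      ∀ n ∈ Finset.Icc 1 N, bc n = 0) :=
  cTrace_sTrace_linearly_independent_general b hb f hf hfne hf0 N
end

section
/- Let C > 0, ε > 0, ω ∈ ℂ with |Im ω| ≤ C, and suppose |F(x,t) − F_N(x,t)| ≤ ε for all 0 ≤ t ≤ x ≤ b. Define c(ω,x) := cos(ωx) + ∫₀ˣ F(x,t)·cos(ωt) dt and c_N(ω,x) := cos(ωx) + ∫₀ˣ F_N(x,t)·cos(ωt) dt. Then for every x ∈ [0,b], |c(ω,x) − c_N(ω,x)| ≤ ε·sinh(Cx)/C. -/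
open Set MeasureTheory Filter

/-! The two solutions differ by `∫₀ˣ (F - F_N)(x,t) cos(ωt) dt`. On the strip `|Im ω| ≤ C` one has
`|cos(ωt)| ≤ cosh(Ct)`, so the difference is at most `ε ∫₀ˣ cosh(Ct) dt = ε sinh(Cx)/C`. -/

theorem Complex.norm_cos_le_cosh_im (z : ℂ) : ‖cos z‖ ≤ Real.cosh z.im := by
  calc ‖cos z‖ = ‖exp (z * I) + exp (-z * I)‖ / 2 := by
        rw [cos, norm_div, Complex.norm_two]
    _ ≤ (‖exp (z * I)‖ + ‖exp (-z * I)‖) / 2 := by gcongr; exact norm_add_le _ _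
    _ = Real.cosh z.im := by
        rw [norm_exp, norm_exp, Real.cosh_eq]
        simp only [mul_re, I_re, I_im, neg_re, neg_im]
        ring_nf

theorem Complex.norm_cos_mul_ofReal_le {ω : ℂ} {C t : ℝ} (hω : |ω.im| ≤ C) (ht : 0 ≤ t) :
    ‖cos (ω * t)‖ ≤ Real.cosh (C * t) := by
  refine (norm_cos_le_cosh_im _).trans ?_
  rw [mul_im, ofReal_re, ofReal_im, mul_zero, zero_add, Real.cosh_le_cosh, abs_mul, abs_mul,
    abs_of_nonneg ht]
  exact mul_le_mul_of_nonneg_right (hω.trans (le_abs_self C)) ht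

theorem integral_cosh_mul {C : ℝ} (hC : C ≠ 0) (x : ℝ) :
    ∫ t in (0 : ℝ)..x, Real.cosh (C * t) = Real.sinh (C * x) / C := by
  rw [intervalIntegral.integral_comp_mul_left (fun u => Real.cosh u) hC,
    intervalIntegral.integral_eq_sub_of_hasDerivAt (fun u _ => Real.hasDerivAt_sinh u)
      (Real.continuous_cosh.intervalIntegrable _ _), mul_zero, Real.sinh_zero, sub_zero, smul_eq_mul,
    inv_mul_eq_div]

theorem norm_integral_mul_cos_le {K : ℝ → ℂ} {ε C x : ℝ} {ω : ℂ} (hC : C ≠ 0) (hx : 0 ≤ x)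
    (hω : |ω.im| ≤ C) (hK : ∀ t ∈ Ioc 0 x, ‖K t‖ ≤ ε) :
    ‖∫ t in (0 : ℝ)..x, K t * Complex.cos (ω * t)‖ ≤ ε * Real.sinh (C * x) / C := by
  have hbound : ∀ t ∈ Ioc 0 x, ‖K t * Complex.cos (ω * t)‖ ≤ ε * Real.cosh (C * t) := fun t ht =>
    (norm_mul _ _).trans_le <| mul_le_mul (hK t ht) (Complex.norm_cos_mul_ofReal_le hω ht.1.le)
      (norm_nonneg _) ((norm_nonneg _).trans (hK t ht))
  calc _ ≤ ∫ t in (0 : ℝ)..x, ε * Real.cosh (C * t) :=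
        intervalIntegral.norm_integral_le_of_norm_le hx (Eventually.of_forall hbound)
          (by apply Continuous.intervalIntegrable; fun_prop)
    _ = _ := by rw [intervalIntegral.integral_const_mul, integral_cosh_mul hC, mul_div_assoc]

theorem intervalIntegrable_slice_mul_cos {F : ℝ → ℝ → ℂ} {b x : ℝ}
    (hF : ContinuousOn (fun p : ℝ × ℝ => F p.1 p.2) {p : ℝ × ℝ | 0 ≤ p.2 ∧ p.2 ≤ p.1 ∧ p.1 ≤ b})
    (hx : 0 ≤ x) (hxb : x ≤ b) (ω : ℂ) :
    IntervalIntegrable (fun t => F x t * Complex.cos (ω * t)) volume 0 x := by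
  have hslice : ContinuousOn (F x) (Icc 0 x) :=
    hF.comp (continuous_const.prodMk continuous_id).continuousOn fun t ht => ⟨ht.1, ht.2, hxb⟩
  refine ContinuousOn.intervalIntegrable ?_
  rw [uIcc_of_le hx]
  exact hslice.mul (by fun_prop)

theorem cosine_solution_uniform_error_general
    (b : ℝ) (F FN : ℝ → ℝ → ℂ)
    (hF : ContinuousOn (fun p : ℝ × ℝ => F p.1 p.2)
      {p : ℝ × ℝ | 0 ≤ p.2 ∧ p.2 ≤ p.1 ∧ p.1 ≤ b})
    (hFN : ContinuousOn (fun p : ℝ × ℝ => FN p.1 p.2)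
      {p : ℝ × ℝ | 0 ≤ p.2 ∧ p.2 ≤ p.1 ∧ p.1 ≤ b})
    (C : ℝ) (hC : 0 < C) (ε : ℝ)
    (ω : ℂ) (hω : |ω.im| ≤ C)
    (hclose : ∀ x t : ℝ, 0 ≤ t → t ≤ x → x ≤ b → ‖F x t - FN x t‖ ≤ ε) :
    ∀ x : ℝ, x ∈ Set.Icc 0 b →
      ‖(Complex.cos (ω * x) + ∫ t in (0:ℝ)..x, F x t * Complex.cos (ω * t))
          - (Complex.cos (ω * x) + ∫ t in (0:ℝ)..x, FN x t * Complex.cos (ω * t))‖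
        ≤ ε * Real.sinh (C * x) / C := by
  rintro x ⟨hx, hxb⟩
  rw [add_sub_add_left_eq_sub, ← intervalIntegral.integral_sub
    (intervalIntegrable_slice_mul_cos hF hx hxb ω) (intervalIntegrable_slice_mul_cos hFN hx hxb ω)]
  simp_rw [← sub_mul]
  exact norm_integral_mul_cos_le hC.ne' hx hω fun t ht => hclose x t ht.1.le ht.2 hxb

/-- if the kernels `F` and `F_N` differ by at most `ε` on the triangle
`0 ≤ t ≤ x ≤ b`, then the corresponding cosine-type solutions differ by at most
`ε sinh(Cx)/C` for every `ω` in the strip `|Im ω| ≤ C`. -/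
theorem cosine_solution_uniform_error
    (b : ℝ) (hb : 0 < b) (F FN : ℝ → ℝ → ℂ)
    (hF : ContinuousOn (fun p : ℝ × ℝ => F p.1 p.2)
      {p : ℝ × ℝ | 0 ≤ p.2 ∧ p.2 ≤ p.1 ∧ p.1 ≤ b})
    (hFN : ContinuousOn (fun p : ℝ × ℝ => FN p.1 p.2)
      {p : ℝ × ℝ | 0 ≤ p.2 ∧ p.2 ≤ p.1 ∧ p.1 ≤ b})
    (C : ℝ) (hC : 0 < C) (ε : ℝ) (hε : 0 < ε)
    (ω : ℂ) (hω : |ω.im| ≤ C)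
    (hclose : ∀ x t : ℝ, 0 ≤ t → t ≤ x → x ≤ b → ‖F x t - FN x t‖ ≤ ε) :
    ∀ x : ℝ, x ∈ Set.Icc 0 b →
      ‖(Complex.cos (ω * x) + ∫ t in (0:ℝ)..x, F x t * Complex.cos (ω * t))
          - (Complex.cos (ω * x) + ∫ t in (0:ℝ)..x, FN x t * Complex.cos (ω * t))‖
        ≤ ε * Real.sinh (C * x) / C :=
  cosine_solution_uniform_error_general b F FN hF hFN C hC ε ω hω hclose
end
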